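/- Let y : [0,T] → ℝ be a nonnegative absolutely continuous function and h ∈ L¹(0,T) nonnegative, with y'(t) ≤ C(1 + h(t))·y(t) for a.e. t. Then (d/dt) ln(1 + ln⁺ y(t)) ≤ C(1 + h(t))/(1 + ln⁺ y(t)) whenever y(t) > 1, and consequently ln(1 + ln⁺ y(t)) ≤ ln(1 + ln⁺ y(0)) + C ∫₀ᵗ (1 + h(s))/(1 + ln⁺ y(s)) ds. -/

import Mathlib

/-!
Where `y > 1`, `ln (1 + ln⁺ y) = ln (1 + ln y)` has derivative `y' / (y (1 + ln y))`, which the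
hypothesis bounds by `C (1 + h) / (1 + ln y)`. The function has a kink where `y` crosses `1`, so
for the integrated form we write it as `ln (1 + ln m)` with `m = max y 1`: `m` has a right
derivative everywhere, bounded a.e. by `C (1 + h) m`, and the one-sided fundamental theorem of
calculus only needs an integrable upper bound for the right derivative.
-/

open MeasureTheory Set Filter Asymptotics

section MaxConst

variable {f : ℝ → ℝ} {f' x c : ℝ}

theorem hasDerivWithinAt_Ioi_max_const_of_eq (hf : HasDerivAt f f' x) (hx : f x = c) :
    HasDerivWithinAt (fun s => max (f s) c) (max f' 0) (Ioi x) x := by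
  subst hx
  refine hasDerivWithinAt_iff_isLittleO.2 (IsBigO.trans_isLittleO ?_
    ((hasDerivAt_iff_isLittleO.1 hf).mono nhdsWithin_le_nhds))
  refine IsBigO.of_bound 1 ?_
  filter_upwards [self_mem_nhdsWithin] with s (hs : x < s)
  simp only [Real.norm_eq_abs, one_mul, smul_eq_mul, max_self]
  rw [← max_sub_sub_right, sub_self, mul_max_of_nonneg _ _ (sub_pos.2 hs).le, mul_zero]
  exact abs_max_sub_max_le_abs (f s - f x) ((s - x) * f') 0

theorem hasDerivAt_max_const_of_lt (hf : HasDerivAt f f' x) (hx : f x < c) :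
    HasDerivAt (fun s => max (f s) c) 0 x := by
  refine (hasDerivAt_const x c).congr_of_eventuallyEq ?_
  filter_upwards [hf.continuousAt.eventually (eventually_lt_nhds hx)] with s hs
  exact max_eq_right hs.le

theorem hasDerivAt_max_const_of_gt (hf : HasDerivAt f f' x) (hx : c < f x) :
    HasDerivAt (fun s => max (f s) c) f' x := by
  refine hf.congr_of_eventuallyEq ?_
  filter_upwards [hf.continuousAt.eventually (eventually_gt_nhds hx)] with s hs
  exact max_eq_left hs.le

theorem exists_hasDerivWithinAt_Ioi_max_const_le (hf : HasDerivAt f f' x) {K : ℝ} (hK : 0 ≤ K)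
    (hc : 0 ≤ c) :
    ∃ d, HasDerivWithinAt (fun s => max (f s) c) d (Ioi x) x ∧
      (f' ≤ K * f x → d ≤ K * max (f x) c) := by
  rcases lt_trichotomy (f x) c with hlt | heq | hgt
  · exact ⟨0, (hasDerivAt_max_const_of_lt hf hlt).hasDerivWithinAt,
      fun _ => mul_nonneg hK (hc.trans (le_max_right _ _))⟩
  · refine ⟨max f' 0, hasDerivWithinAt_Ioi_max_const_of_eq hf heq, fun hf' => ?_⟩
    rw [heq, max_self] at *
    exact max_le hf' (mul_nonneg hK hc)
  · exact ⟨f', (hasDerivAt_max_const_of_gt hf hgt).hasDerivWithinAt,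
      fun hf' => by rwa [max_eq_left hgt.le]⟩

end MaxConst

theorem HasDerivWithinAt.log_one_add_log {m : ℝ → ℝ} {d x : ℝ} {s : Set ℝ}
    (hm : HasDerivWithinAt m d s x) (hx : 1 ≤ m x) :
    HasDerivWithinAt (fun t => Real.log (1 + Real.log (m t)))
      (d / m x / (1 + Real.log (m x))) s x :=
  ((hm.log (by positivity)).const_add 1).log (by have := Real.log_nonneg hx; positivity)

theorem div_div_one_add_log_le {u d K : ℝ} (hu : 1 ≤ u) (hd : d ≤ K * u) :
    d / u / (1 + Real.log u) ≤ K / (1 + Real.log u) := by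
  have := Real.log_nonneg hu
  gcongr
  exact (div_le_iff₀ (by positivity)).2 hd

theorem deriv_log_one_add_max_log_zero_le {y : ℝ → ℝ} {y' t K : ℝ} (hy : HasDerivAt y y' t)
    (hyt : 1 < y t) (hbound : y' ≤ K * y t) :
    deriv (fun s => Real.log (1 + max (Real.log (y s)) 0)) t ≤
      K / (1 + max (Real.log (y t)) 0) := by
  have hderiv := hasDerivWithinAt_univ.1 (hy.hasDerivWithinAt.log_one_add_log hyt.le)
  rw [max_eq_left (Real.log_pos hyt).le, (hderiv.congr_of_eventuallyEq ?_).deriv]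
  · exact div_div_one_add_log_le hyt.le hbound
  filter_upwards [hy.continuousAt.eventually (eventually_gt_nhds hyt)] with s hs
  rw [max_eq_left (Real.log_pos hs).le]

theorem sub_le_integral_of_hasDerivWithinAt_Ioi_of_ae_le {g g' φ : ℝ → ℝ} {a b : ℝ}
    (hab : a ≤ b) (hcont : ContinuousOn g (Icc a b))
    (hderiv : ∀ x ∈ Ioo a b, HasDerivWithinAt g (g' x) (Ioi x) x)
    (hφ : IntegrableOn φ (Icc a b)) (hle : ∀ᵐ x ∂volume.restrict (Ioo a b), g' x ≤ φ x) :
    g b - g a ≤ ∫ x in a..b, φ x := by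
  have hmax : (fun x => max (g' x) (φ x)) =ᵐ[volume.restrict (Icc a b)] φ := by
    rw [EventuallyEq, ← ae_restrict_congr_set Ioo_ae_eq_Icc]
    filter_upwards [hle] with x hx using max_eq_right hx
  calc g b - g a ≤ ∫ x in a..b, max (g' x) (φ x) :=
        intervalIntegral.sub_le_integral_of_hasDeriv_right_of_le hab hcont hderiv
          (hφ.congr_fun_ae hmax.symm) fun x _ => le_max_left _ _
    _ = ∫ x in a..b, φ x := intervalIntegral.integral_congr_ae_restrict <|
        ae_restrict_of_ae_restrict_of_subset (uIoc_of_le hab ▸ Ioc_subset_Icc_self) hmax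

theorem log_one_add_log_sub_le_integral {m d K : ℝ → ℝ} {a b : ℝ} (hab : a ≤ b)
    (hm : ∀ x ∈ Icc a b, 1 ≤ m x) (hcont : ContinuousOn m (Icc a b))
    (hderiv : ∀ x ∈ Ioo a b, HasDerivWithinAt m (d x) (Ioi x) x) (hK : IntegrableOn K (Icc a b))
    (hle : ∀ᵐ x ∂volume.restrict (Ioo a b), d x ≤ K x * m x) :
    Real.log (1 + Real.log (m b)) - Real.log (1 + Real.log (m a)) ≤
      ∫ x in a..b, K x / (1 + Real.log (m x)) := by
  have hpos : ∀ x ∈ Icc a b, 0 < 1 + Real.log (m x) := fun x hx => by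
    have := Real.log_nonneg (hm x hx); positivity
  have hcont_log : ContinuousOn (fun x => 1 + Real.log (m x)) (Icc a b) :=
    continuousOn_const.add (hcont.log fun x hx => (zero_lt_one.trans_le (hm x hx)).ne')
  refine sub_le_integral_of_hasDerivWithinAt_Ioi_of_ae_le hab
    (hcont_log.log fun x hx => (hpos x hx).ne')
    (fun x hx => (hderiv x hx).log_one_add_log (hm x (Ioo_subset_Icc_self hx)))
    ?_ ?_
  · simpa only [div_eq_mul_inv, Pi.inv_apply] using
      hK.mul_continuousOn (hcont_log.inv₀ fun x hx => (hpos x hx).ne') isCompact_Icc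
  · filter_upwards [hle, self_mem_ae_restrict measurableSet_Ioo] with x hx hxI
    exact div_div_one_add_log_le (hm x (Ioo_subset_Icc_self hxI)) hx

theorem max_log_zero_eq_log_max_one {x : ℝ} (hx : 0 ≤ x) :
    max (Real.log x) 0 = Real.log (max x 1) := by
  rw [max_comm, max_comm x]
  exact Real.posLog_eq_log_max_one hx

theorem stmt_13_general (T C : ℝ) (hC : 0 < C)
    (y y' h : ℝ → ℝ)
    (hy : ∀ t, HasDerivAt y (y' t) t)
    (hynn : ∀ t ∈ Set.Icc 0 T, 0 ≤ y t)
    (hh : IntegrableOn h (Set.Ioo 0 T)) (hhnn : ∀ t, 0 ≤ h t)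
    (hbound : ∀ᵐ t ∂(volume.restrict (Set.Ioo 0 T)), y' t ≤ C * (1 + h t) * y t) :
    (∀ᵐ t ∂(volume.restrict (Set.Ioo 0 T)), 1 < y t →
        deriv (fun s => Real.log (1 + max (Real.log (y s)) 0)) t ≤
          C * (1 + h t) / (1 + max (Real.log (y t)) 0)) ∧
      ∀ t ∈ Set.Icc 0 T,
        Real.log (1 + max (Real.log (y t)) 0) ≤
          Real.log (1 + max (Real.log (y 0)) 0) +
            C * ∫ s in (0 : ℝ)..t, (1 + h s) / (1 + max (Real.log (y s)) 0) := by
  have hK : ∀ t, 0 ≤ C * (1 + h t) := fun t => by have := hhnn t; positivity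
  refine ⟨?_, fun t ht => ?_⟩
  · filter_upwards [hbound] with t hbt hyt using deriv_log_one_add_max_log_zero_le (hy t) hyt hbt
  choose d hd hd_le using fun x =>
    exists_hasDerivWithinAt_Ioi_max_const_le (hy x) (hK x) zero_le_one
  have hsub : Icc 0 t ⊆ Icc 0 T := Icc_subset_Icc_right ht.2
  have hmain := log_one_add_log_sub_le_integral (m := fun s => max (y s) 1)
    (K := fun s => C * (1 + h s))
    ht.1 (fun x _ => le_max_right _ _)
    ((continuous_iff_continuousAt.2 fun s => (hy s).continuousAt).max continuous_const).continuousOn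
    (fun x _ => hd x)
    (((integrableOn_const measure_Icc_lt_top.ne).add
      ((hh.mono_set (Ioo_subset_Ioo_right ht.2)).congr_set_ae Ioo_ae_eq_Icc.symm)).const_mul C)
    (by
      filter_upwards [ae_restrict_of_ae_restrict_of_subset (Ioo_subset_Ioo_right ht.2) hbound]
        with x hx using hd_le x hx)
  have hintegral : ∫ s in (0 : ℝ)..t, C * (1 + h s) / (1 + Real.log (max (y s) 1)) =
      C * ∫ s in (0 : ℝ)..t, (1 + h s) / (1 + max (Real.log (y s)) 0) := by
    rw [← intervalIntegral.integral_const_mul]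
    refine intervalIntegral.integral_congr fun s hs => ?_
    rw [uIcc_of_le ht.1] at hs
    rw [max_log_zero_eq_log_max_one (hynn s (hsub hs)), mul_div_assoc]
  rw [max_log_zero_eq_log_max_one (hynn t ht),
    max_log_zero_eq_log_max_one (hynn 0 (left_mem_Icc.2 (ht.1.trans ht.2)))]
  linarith

theorem stmt_13 (T C : ℝ) (hT : 0 < T) (hC : 0 < C)
    (y y' h : ℝ → ℝ)
    (hy : ∀ t, HasDerivAt y (y' t) t)
    (hynn : ∀ t ∈ Set.Icc 0 T, 0 ≤ y t)
    (hh : IntegrableOn h (Set.Ioo 0 T)) (hhnn : ∀ t, 0 ≤ h t)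
    (hbound : ∀ᵐ t ∂(volume.restrict (Set.Ioo 0 T)), y' t ≤ C * (1 + h t) * y t) :
    (∀ᵐ t ∂(volume.restrict (Set.Ioo 0 T)), 1 < y t →
        deriv (fun s => Real.log (1 + max (Real.log (y s)) 0)) t ≤
          C * (1 + h t) / (1 + max (Real.log (y t)) 0)) ∧
      ∀ t ∈ Set.Icc 0 T,
        Real.log (1 + max (Real.log (y t)) 0) ≤
          Real.log (1 + max (Real.log (y 0)) 0) +
            C * ∫ s in (0 : ℝ)..t, (1 + h s) / (1 + max (Real.log (y s)) 0) :=
  stmt_13_general T C hC y y' h hy hynn hh hhnn hbound
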